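/- Let ψ be a Cartan–Hadamard model function such that ∫₀^∞ Θ(s)^{1/(p−1)} ds = +∞ and ψ″ > 0 on some nonempty open interval of (0,∞). Then every global radial solution u satisfies ∫₀^∞ |u′(r)|^p ψ(r)^{n−1} dr = +∞ (the solution has infinite energy). -/

import Mathlib

open Real Filter MeasureTheory
open scoped ENNReal Topology

/-- The volume-to-surface ratio `Θ(r) = (∫₀ʳ ψ(s)^{n-1} ds) / ψ(r)^{n-1}`. -/
noncomputable def Theta (n : ℕ) (ψ : ℝ → ℝ) (r : ℝ) : ℝ :=
  (∫ s in (0:ℝ)..r, ψ s ^ (n - 1)) / ψ r ^ (n - 1)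

/-- A Cartan–Hadamard model function: smooth, `ψ(0)=0`, `ψ'(0)=1`, convex on `[0,∞)`,
positive on `(0,∞)`. -/
def IsCHModel (ψ : ℝ → ℝ) : Prop :=
  ContDiff ℝ (⊤ : ℕ∞) ψ ∧ ψ 0 = 0 ∧ deriv ψ 0 = 1 ∧
    (∀ r : ℝ, 0 ≤ r → 0 ≤ deriv (deriv ψ) r) ∧ (∀ r : ℝ, 0 < r → 0 < ψ r)

/-- A radial solution on `[0,T)` (with `T ∈ (0,∞]`) with initial datum `α`:
`u ∈ C¹([0,T))`, `u(0)=α`, `u'(0)=0`, `u>0` on `[0,T)`, and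
`(ψ^{n-1} |u'|^{p-2} u')' = -ψ^{n-1} u^q` on `(0,T)`. -/
structure IsRadialSolution (n : ℕ) (p q : ℝ) (ψ : ℝ → ℝ) (T : ℝ≥0∞) (α : ℝ)
    (u : ℝ → ℝ) : Prop where
  init : u 0 = α
  deriv_init : deriv u 0 = 0
  pos : ∀ r : ℝ, 0 ≤ r → ENNReal.ofReal r < T → 0 < u r
  diff : ∀ r : ℝ, 0 ≤ r → ENNReal.ofReal r < T → DifferentiableAt ℝ u r
  deriv_cont : ContinuousOn (deriv u) {r : ℝ | 0 ≤ r ∧ ENNReal.ofReal r < T}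
  eqn : ∀ r : ℝ, 0 < r → ENNReal.ofReal r < T →
    HasDerivAt (fun s => ψ s ^ (n - 1) * |deriv u s| ^ (p - 2) * deriv u s)
      (-(ψ r ^ (n - 1) * u r ^ q)) r

/-- The energy function `F_u(r) = ((p-1)/p)|u'(r)|^p + u(r)^{q+1}/(q+1)`. -/
noncomputable def energyF (p q : ℝ) (u : ℝ → ℝ) (r : ℝ) : ℝ :=
  (p - 1) / p * |deriv u r| ^ p + u r ^ (q + 1) / (q + 1)

/-- The Pohozaev function
`P_u(r) = (∫₀ʳ ψ^{n-1}) F_u(r) + (ψ(r)^{n-1}/(q+1)) |u'(r)|^{p-2} u'(r) u(r)`. -/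
noncomputable def pohozaevP (n : ℕ) (p q : ℝ) (ψ u : ℝ → ℝ) (r : ℝ) : ℝ :=
  (∫ s in (0:ℝ)..r, ψ s ^ (n - 1)) * energyF p q u r +
    ψ r ^ (n - 1) / (q + 1) * (|deriv u r| ^ (p - 2) * deriv u r * u r)

/-- `K(r) = ((p-1)/p + 1/(q+1)) ψ(r)^{n-1} - (n-1)(ψ'(r)/ψ(r)) ∫₀ʳ ψ^{n-1}`. -/
noncomputable def Kfun (n : ℕ) (p q : ℝ) (ψ : ℝ → ℝ) (r : ℝ) : ℝ :=
  ((p - 1) / p + 1 / (q + 1)) * ψ r ^ (n - 1) -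
    ((n : ℝ) - 1) * (deriv ψ r / ψ r) * ∫ s in (0:ℝ)..r, ψ s ^ (n - 1)

/-- Condition (a): `r^γ ψ'(r)/ψ(r) → ℓ ∈ (0,∞)` for some `γ ∈ [0,1)`. -/
def CondA (ψ : ℝ → ℝ) : Prop :=
  ∃ γ ℓ : ℝ, 0 ≤ γ ∧ γ < 1 ∧ 0 < ℓ ∧
    Tendsto (fun r : ℝ => r ^ γ * deriv ψ r / ψ r) atTop (nhds ℓ)

/-- Condition (b): `ψ'/ψ → +∞` and `(ψ/ψ') (log(ψ'/ψ))' → 0`. -/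
def CondB (ψ : ℝ → ℝ) : Prop :=
  Tendsto (fun r : ℝ => deriv ψ r / ψ r) atTop atTop ∧
    Tendsto (fun r : ℝ => ψ r / deriv ψ r *
      deriv (fun s : ℝ => Real.log (deriv ψ s / ψ s)) r) atTop (nhds 0)


/- ### Auxiliary definitions -/

noncomputable def Vfun (n : ℕ) (ψ : ℝ → ℝ) (r : ℝ) : ℝ := ∫ s in (0:ℝ)..r, ψ s ^ (n - 1)

noncomputable def phiF (n : ℕ) (p : ℝ) (ψ u : ℝ → ℝ) (r : ℝ) : ℝ :=
  ψ r ^ (n - 1) * |deriv u r| ^ (p - 2) * deriv u r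

noncomputable def Gfun (n : ℕ) (ψ : ℝ → ℝ) (r : ℝ) : ℝ :=
  (n : ℝ) * deriv ψ r * Vfun n ψ r - ψ r ^ n

set_option linter.unusedVariables false
set_option linter.unusedSectionVars false

lemma gabs (p : ℝ) (hp1 : 1 < p) (x : ℝ) : |(|x| ^ (p - 2) * x)| = |x| ^ (p - 1) := by
  rcases eq_or_ne x 0 with h | h
  · simp [h, Real.zero_rpow (by linarith : p - 1 ≠ 0)]
  · have hx : (0:ℝ) < |x| := abs_pos.2 h
    rw [abs_mul, abs_of_nonneg (Real.rpow_nonneg (abs_nonneg x) _),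
      ← Real.rpow_add_one hx.ne']
    ring_nf


lemma gcont' (p : ℝ) (hp1 : 1 < p) : Continuous (fun x : ℝ => |x| ^ (p - 2) * x) := by
  rw [continuous_iff_continuousAt]
  intro x
  rcases eq_or_ne x 0 with h | h
  · subst h
    have h1 : Tendsto (fun x : ℝ => |x| ^ (p - 2) * x) (𝓝 0) (𝓝 0) := by
      apply squeeze_zero_norm (fun t => (gabs p hp1 t).le)
      have : ContinuousAt (fun y : ℝ => y ^ (p - 1)) 0 :=
        Real.continuousAt_rpow_const 0 _ (Or.inr (by linarith))
      have h2 : Tendsto (fun x : ℝ => |x| ^ (p - 1)) (𝓝 0) (𝓝 ((0:ℝ) ^ (p - 1))) :=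
        (this.tendsto).comp (continuous_abs.tendsto' 0 0 (abs_zero))
      simpa [Real.zero_rpow (by linarith : p - 1 ≠ 0)] using h2
    simpa [ContinuousAt] using h1
  · exact ((Real.continuousAt_rpow_const _ _ (Or.inl (abs_ne_zero.2 h))).comp
      continuous_abs.continuousAt).mul continuousAt_id

variable {n : ℕ} {ψ : ℝ → ℝ}

lemma psi_diff (hψ : IsCHModel ψ) : Differentiable ℝ ψ := hψ.1.differentiable (by simp)

lemma psi_deriv_diff (hψ : IsCHModel ψ) : Differentiable ℝ (deriv ψ) :=
  ((contDiff_infty_iff_deriv.mp ((contDiff_infty.{0,0,0}).mpr (fun m => hψ.1.of_le (by exact_mod_cast le_top)))).2).differentiable (by simp)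

lemma deriv_psi_ge_one (hψ : IsCHModel ψ) {r : ℝ} (hr : 0 ≤ r) : 1 ≤ deriv ψ r := by
  have hmono : MonotoneOn (deriv ψ) (Set.Ici 0) := by
    apply monotoneOn_of_deriv_nonneg (convex_Ici 0)
      (psi_deriv_diff hψ).continuous.continuousOn
      ((psi_deriv_diff hψ).differentiableOn)
    intro x hx
    rw [interior_Ici] at hx
    exact hψ.2.2.2.1 x (le_of_lt hx)
  calc (1:ℝ) = deriv ψ 0 := hψ.2.2.1.symm
    _ ≤ deriv ψ r := hmono (Set.mem_Ici.2 le_rfl) hr hr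

lemma psi_nonneg (hψ : IsCHModel ψ) {r : ℝ} (hr : 0 ≤ r) : 0 ≤ ψ r := by
  rcases eq_or_lt_of_le hr with h | h
  · simp [← h, hψ.2.1]
  · exact (hψ.2.2.2.2 r h).le

lemma psi_monoOn (hψ : IsCHModel ψ) : MonotoneOn ψ (Set.Ici 0) := by
  apply monotoneOn_of_deriv_nonneg (convex_Ici 0) (psi_diff hψ).continuous.continuousOn
    (psi_diff hψ).differentiableOn
  intro x hx
  rw [interior_Ici] at hx
  linarith [deriv_psi_ge_one hψ hx.le]


lemma Vfun_hasDeriv (hψ : IsCHModel ψ) (r : ℝ) :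
    HasDerivAt (Vfun n ψ) (ψ r ^ (n - 1)) r := by
  have hc : Continuous (fun s => ψ s ^ (n - 1)) := ((psi_diff hψ).continuous).pow _
  exact intervalIntegral.integral_hasDerivAt_right (hc.intervalIntegrable _ _)
    (hc.stronglyMeasurableAtFilter _ _) hc.continuousAt

lemma Vfun_zero : Vfun n ψ 0 = 0 := intervalIntegral.integral_same

lemma Vfun_nonneg (hψ : IsCHModel ψ) {r : ℝ} (hr : 0 ≤ r) : 0 ≤ Vfun n ψ r := by
  apply intervalIntegral.integral_nonneg hr
  intro s hs
  exact pow_nonneg (psi_nonneg hψ hs.1) _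

lemma Vfun_pos (hn : 2 ≤ n) (hψ : IsCHModel ψ) {r : ℝ} (hr : 0 < r) : 0 < Vfun n ψ r := by
  apply intervalIntegral.intervalIntegral_pos_of_pos_on
    ((((psi_diff hψ).continuous).pow _).intervalIntegrable _ _)
    (fun x hx => pow_pos (hψ.2.2.2.2 x hx.1) _) hr

lemma Vfun_le (hψ : IsCHModel ψ) {r : ℝ} (hr : 0 ≤ r) :
    Vfun n ψ r ≤ r * ψ r ^ (n - 1) := by
  have := intervalIntegral.integral_mono_on (μ := volume) hr
    ((((psi_diff hψ).continuous).pow (n-1)).intervalIntegrable 0 r)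
    (intervalIntegrable_const) (f := fun s => ψ s ^ (n-1)) (g := fun _ => ψ r ^ (n-1))
    (fun x hx => pow_le_pow_left₀ (psi_nonneg hψ hx.1) (psi_monoOn hψ hx.1 hr hx.2) _)
  simpa [Vfun] using this

lemma Vfun_mono (hψ : IsCHModel ψ) : MonotoneOn (Vfun n ψ) (Set.Ici 0) := by
  apply monotoneOn_of_deriv_nonneg (convex_Ici 0)
    (fun x _ => (Vfun_hasDeriv hψ x).continuousAt.continuousWithinAt)
    (fun x _ => ((Vfun_hasDeriv hψ x).differentiableAt).differentiableWithinAt)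
  intro x hx
  rw [interior_Ici] at hx
  rw [(Vfun_hasDeriv hψ x).deriv]
  exact pow_nonneg (psi_nonneg hψ hx.le) _

section
variable {n : ℕ} {ψ : ℝ → ℝ}
lemma Theta_eq (r : ℝ) : Theta n ψ r = Vfun n ψ r / ψ r ^ (n - 1) := rfl

lemma Theta_nonneg (hψ : IsCHModel ψ) {r : ℝ} (hr : 0 ≤ r) : 0 ≤ Theta n ψ r := by
  rw [Theta_eq]
  rcases eq_or_lt_of_le hr with h | h
  · simp [← h, Vfun, hψ.2.1]
  · exact div_nonneg (Vfun_nonneg hψ hr) (pow_nonneg (hψ.2.2.2.2 r h).le _)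

lemma Theta_pos (hn : 2 ≤ n) (hψ : IsCHModel ψ) {r : ℝ} (hr : 0 < r) : 0 < Theta n ψ r :=
  div_pos (Vfun_pos hn hψ hr) (pow_pos (hψ.2.2.2.2 r hr) _)

lemma Theta_le_self (hψ : IsCHModel ψ) {r : ℝ} (hr : 0 ≤ r) : Theta n ψ r ≤ r := by
  rw [Theta_eq]
  rcases eq_or_lt_of_le hr with h | h
  · simp [← h, Vfun, hψ.2.1]
  · rw [div_le_iff₀ (pow_pos (hψ.2.2.2.2 r h) _)]
    exact Vfun_le hψ hr
end

section
variable {n : ℕ} {p q α : ℝ} {ψ u : ℝ → ℝ}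


variable (hu : IsRadialSolution n p q ψ ⊤ α u)
include hu

lemma u_pos {r : ℝ} (hr : 0 ≤ r) : 0 < u r := hu.pos r hr ENNReal.ofReal_lt_top
lemma u_diffAt {r : ℝ} (hr : 0 ≤ r) : DifferentiableAt ℝ u r :=
  hu.diff r hr ENNReal.ofReal_lt_top
lemma u_contOn : ContinuousOn u (Set.Ici 0) :=
  fun r hr => ((u_diffAt hu hr).continuousAt).continuousWithinAt
lemma u'_contOn : ContinuousOn (deriv u) (Set.Ici 0) := by
  have := hu.deriv_cont
  have hs : {r : ℝ | 0 ≤ r ∧ ENNReal.ofReal r < ⊤} = Set.Ici 0 := by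
    ext x; simp [ENNReal.ofReal_lt_top]
  rwa [hs] at this

lemma phi_contOn (hp1 : 1 < p) (hψ : IsCHModel ψ) :
    ContinuousOn (phiF n p ψ u) (Set.Ici 0) := by
  have h1 : phiF n p ψ u = fun r => ψ r ^ (n - 1) * (|deriv u r| ^ (p - 2) * deriv u r) := by
    funext r; rw [phiF, mul_assoc]
  rw [h1]
  exact (((psi_diff hψ).continuous.pow _).continuousOn).mul
    ((gcont' p hp1).comp_continuousOn (u'_contOn hu))

lemma phi_eq (hn : 2 ≤ n) (hp1 : 1 < p) (hψ : IsCHModel ψ) {r : ℝ} (hr : 0 ≤ r) :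
    phiF n p ψ u r = -∫ s in (0:ℝ)..r, ψ s ^ (n - 1) * u s ^ q := by
  have hphi0 : phiF n p ψ u 0 = 0 := by
    rw [phiF, hψ.2.1, zero_pow (by omega : n - 1 ≠ 0), zero_mul, zero_mul]
  have hftc : ∫ s in (0:ℝ)..r, -(ψ s ^ (n - 1) * u s ^ q)
      = phiF n p ψ u r - phiF n p ψ u 0 := by
    apply intervalIntegral.integral_eq_sub_of_hasDeriv_right
    · rw [Set.uIcc_of_le hr]
      exact (phi_contOn hu hp1 hψ).mono (by intro x hx; exact hx.1)
    · intro x hx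
      rw [min_eq_left hr, max_eq_right hr] at hx
      exact ((hu.eqn x hx.1 ENNReal.ofReal_lt_top).hasDerivWithinAt)
    · apply ContinuousOn.intervalIntegrable
      rw [Set.uIcc_of_le hr]
      apply ContinuousOn.neg
      apply (((psi_diff hψ).continuous.pow _).continuousOn).mul
      apply ContinuousOn.rpow_const ((u_contOn hu).mono (fun x hx => hx.1))
      intro x hx
      exact Or.inl (u_pos hu hx.1).ne'
  rw [hphi0, sub_zero] at hftc
  rw [← hftc, intervalIntegral.integral_neg]

lemma phi_neg (hn : 2 ≤ n) (hp1 : 1 < p) (hψ : IsCHModel ψ) {r : ℝ} (hr : 0 < r) :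
    phiF n p ψ u r < 0 := by
  rw [phi_eq hu hn hp1 hψ hr.le, neg_lt, neg_zero]
  apply intervalIntegral.intervalIntegral_pos_of_pos_on
  · apply ContinuousOn.intervalIntegrable
    rw [Set.uIcc_of_le hr.le]
    apply (((psi_diff hψ).continuous.pow _).continuousOn).mul
    apply ContinuousOn.rpow_const ((u_contOn hu).mono (fun x hx => hx.1))
    intro x hx
    exact Or.inl (u_pos hu hx.1).ne'
  · intro x hx
    exact mul_pos (pow_pos (hψ.2.2.2.2 x hx.1) _) (Real.rpow_pos_of_pos (u_pos hu hx.1.le) q)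
  · exact hr

lemma u'_neg (hn : 2 ≤ n) (hp1 : 1 < p) (hψ : IsCHModel ψ) {r : ℝ} (hr : 0 < r) :
    deriv u r < 0 := by
  have h := phi_neg hu hn hp1 hψ hr
  rw [phiF] at h
  by_contra hge
  push_neg at hge
  have : 0 ≤ ψ r ^ (n - 1) * |deriv u r| ^ (p - 2) * deriv u r :=
    mul_nonneg (mul_nonneg (pow_nonneg (hψ.2.2.2.2 r hr).le _)
      (Real.rpow_nonneg (abs_nonneg _) _)) hge
  linarith

lemma u_strictAnti (hn : 2 ≤ n) (hp1 : 1 < p) (hψ : IsCHModel ψ) :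
    StrictAntiOn u (Set.Ici 0) := by
  apply strictAntiOn_of_deriv_neg (convex_Ici 0) (u_contOn hu)
  intro x hx
  rw [interior_Ici] at hx
  exact u'_neg hu hn hp1 hψ hx

end

section
variable {n : ℕ} {p q α : ℝ} {ψ u : ℝ → ℝ}
section
variable (hupos : ∀ ⦃r : ℝ⦄, 0 ≤ r → 0 < u r)
  (hucont : ContinuousOn u (Set.Ici 0))
  (huanti : StrictAntiOn u (Set.Ici 0))
  (hu'neg : ∀ ⦃r : ℝ⦄, 0 < r → deriv u r < 0)
  (hphieq : ∀ ⦃r : ℝ⦄, 0 ≤ r → phiF n p ψ u r = -∫ s in (0:ℝ)..r, ψ s ^ (n - 1) * u s ^ q)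

include hupos hucont huanti hphieq in
lemma flux_lb (hq0 : 0 ≤ q) (hψ : IsCHModel ψ) {r : ℝ} (hr : 0 < r) :
    u r ^ q * Vfun n ψ r ≤ -phiF n p ψ u r := by
  rw [hphieq hr.le, neg_neg]
  have hle : ∀ x ∈ Set.Icc (0:ℝ) r, u r ≤ u x := by
    intro x hx
    rcases eq_or_lt_of_le hx.2 with h | h
    · rw [h]
    · exact (huanti hx.1 (Set.mem_Ici.2 hr.le) h).le
  have hmono := intervalIntegral.integral_mono_on (μ := volume) hr.le
    (f := fun s => ψ s ^ (n - 1) * u r ^ q) (g := fun s => ψ s ^ (n - 1) * u s ^ q)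
    ((((psi_diff hψ).continuous.pow _).mul continuous_const).intervalIntegrable 0 r)
    (by
      apply ContinuousOn.intervalIntegrable
      rw [Set.uIcc_of_le hr.le]
      apply (((psi_diff hψ).continuous.pow _).continuousOn).mul
      apply ContinuousOn.rpow_const (hucont.mono (fun x hx => hx.1))
      exact fun x hx => Or.inl (hupos hx.1).ne')
    (fun x hx => mul_le_mul_of_nonneg_left
      (Real.rpow_le_rpow (hupos hr.le).le (hle x hx) hq0)
      (pow_nonneg (psi_nonneg hψ hx.1) _))
  calc u r ^ q * Vfun n ψ r = ∫ s in (0:ℝ)..r, ψ s ^ (n - 1) * u r ^ q := by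
        rw [intervalIntegral.integral_mul_const, Vfun, mul_comm]
    _ ≤ _ := hmono

include hu'neg in
lemma absu'_pow (hp1 : 1 < p) (hψ : IsCHModel ψ) {r : ℝ} (hr : 0 < r) :
    |deriv u r| ^ (p - 1) * ψ r ^ (n - 1) = -phiF n p ψ u r := by
  have h1 : deriv u r < 0 := hu'neg hr
  have h2 : |deriv u r| = -deriv u r := abs_of_neg h1
  have h3 : (0:ℝ) < |deriv u r| := abs_pos.2 h1.ne
  have key : |deriv u r| ^ (p - 2) * |deriv u r| = |deriv u r| ^ (p - 1) := by
    rw [← Real.rpow_add_one h3.ne']; ring_nf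
  rw [phiF, ← key, h2]; ring

include hupos hucont huanti hu'neg hphieq in
lemma u'_lb (hn : 2 ≤ n) (hp1 : 1 < p) (hq0 : 0 ≤ q) (hψ : IsCHModel ψ)
    {r : ℝ} (hr : 0 < r) :
    u r ^ (q / (p - 1)) * Theta n ψ r ^ (1 / (p - 1)) ≤ -deriv u r := by
  have hψr : (0:ℝ) < ψ r ^ (n - 1) := pow_pos (hψ.2.2.2.2 r hr) _
  have hp1' : p - 1 ≠ 0 := by linarith
  have hΘ : (0:ℝ) ≤ Theta n ψ r := by
    rw [Theta_eq]
    exact div_nonneg (by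
      apply intervalIntegral.integral_nonneg hr.le
      exact fun s hs => pow_nonneg (psi_nonneg hψ hs.1) _) hψr.le
  have h1 : u r ^ q * Theta n ψ r ≤ |deriv u r| ^ (p - 1) := by
    rw [Theta_eq, ← mul_div_assoc, div_le_iff₀ hψr]
    calc u r ^ q * Vfun n ψ r ≤ -phiF n p ψ u r :=
          flux_lb hupos hucont huanti hphieq hq0 hψ hr
      _ = |deriv u r| ^ (p - 1) * ψ r ^ (n - 1) := (absu'_pow hu'neg hp1 hψ hr).symm
  have hbase : (0:ℝ) ≤ u r ^ q * Theta n ψ r :=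
    mul_nonneg (Real.rpow_nonneg (hupos hr.le).le _) hΘ
  have h2 := Real.rpow_le_rpow hbase h1 (one_div_nonneg.mpr (by linarith : (0:ℝ) ≤ p - 1))
  rw [Real.mul_rpow (Real.rpow_nonneg (hupos hr.le).le _) hΘ,
    ← Real.rpow_mul (hupos hr.le).le, ← Real.rpow_mul (abs_nonneg _), mul_one_div,
    mul_one_div, div_self hp1', Real.rpow_one, abs_of_neg (hu'neg hr)] at h2
  exact h2
end

section
variable {n : ℕ} {p q α : ℝ} {ψ u : ℝ → ℝ}
section
variable (hupos : ∀ ⦃r : ℝ⦄, 0 ≤ r → 0 < u r)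
  (hucont : ContinuousOn u (Set.Ici 0))
  (hudiff : ∀ ⦃r : ℝ⦄, 0 ≤ r → DifferentiableAt ℝ u r)
  (hu'lb : ∀ ⦃r : ℝ⦄, 0 < r →
    u r ^ (q / (p - 1)) * Theta n ψ r ^ (1 / (p - 1)) ≤ -deriv u r)

include hupos hucont hudiff hu'lb in
lemma u_to_zero (hn : 2 ≤ n) (hp1 : 1 < p) (hqp : p - 1 < q) (hψ : IsCHModel ψ)
    (hpc : Tendsto (fun r : ℝ => ∫ s in (0:ℝ)..r, Theta n ψ s ^ (1 / (p - 1)))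
      atTop atTop) :
    Tendsto u atTop (𝓝 0) := by
  have hp0 : (0:ℝ) < p - 1 := by linarith
  set β : ℝ := q / (p - 1) - 1 with hβdef
  have hβ : 0 < β := by
    rw [hβdef, sub_pos, lt_div_iff₀ hp0]; linarith
  set Θf : ℝ → ℝ := fun s => Theta n ψ s ^ (1 / (p - 1)) with hΘfdef
  have hpow : Continuous (fun x : ℝ => x ^ (1 / (p - 1))) :=
    continuous_iff_continuousAt.mpr
      (fun x => Real.continuousAt_rpow_const x _ (Or.inr (by positivity)))
  have hVcont : Continuous (Vfun n ψ) :=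
    continuous_iff_continuousAt.mpr (fun x => (Vfun_hasDeriv hψ x).continuousAt)
  have hΘmeas : Measurable Θf :=
    hpow.measurable.comp
      ((hVcont.measurable).div (((psi_diff hψ).continuous.pow _).measurable))
  have hint : ∀ R : ℝ, 0 ≤ R → IntervalIntegrable Θf volume 0 R := by
    intro R hR
    rw [intervalIntegrable_iff_integrableOn_Ioc_of_le hR]
    apply Integrable.mono' (g := fun _ => (max 1 R) ^ (1 / (p - 1)))
      (integrableOn_const measure_Ioc_lt_top.ne)
      hΘmeas.aestronglyMeasurable.restrict
    rw [ae_restrict_iff' measurableSet_Ioc]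
    apply Eventually.of_forall
    intro x hx
    rw [Real.norm_eq_abs, abs_of_nonneg (Real.rpow_nonneg (Theta_nonneg hψ hx.1.le) _)]
    apply Real.rpow_le_rpow (Theta_nonneg hψ hx.1.le) _ (by positivity)
    calc Theta n ψ x ≤ x := Theta_le_self hψ hx.1.le
      _ ≤ R := hx.2
      _ ≤ max 1 R := le_max_right 1 R
  set J : ℝ → ℝ := fun R => ∫ s in (0:ℝ)..R, Θf s with hJdef
  have hJd : ∀ ⦃R : ℝ⦄, 0 < R → HasDerivAt J (Θf R) R := by
    intro R hR
    apply intervalIntegral.integral_hasDerivAt_right (hint R hR.le)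
      (hΘmeas.stronglyMeasurable.stronglyMeasurableAtFilter)
    apply hpow.continuousAt.comp
    exact ContinuousAt.div hVcont.continuousAt
      (((psi_diff hψ).continuous.pow _).continuousAt)
      (pow_ne_zero _ (hψ.2.2.2.2 R hR).ne')
  set W : ℝ → ℝ := fun R => u R ^ (-β) - β * J R with hWdef
  have hWd : ∀ ⦃x : ℝ⦄, 0 < x →
      HasDerivAt W (deriv u x * (-β) * u x ^ (-β - 1) - β * Θf x) x := by
    intro x hx
    exact (((hudiff hx.le).hasDerivAt.rpow_const (Or.inl (hupos hx.le).ne')).sub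
      ((hJd hx).const_mul β))
  have hWmono : MonotoneOn W (Set.Ici 1) := by
    apply monotoneOn_of_deriv_nonneg (convex_Ici 1)
    · intro x hx
      exact ((hWd (lt_of_lt_of_le one_pos hx)).continuousAt).continuousWithinAt
    · intro x hx
      rw [interior_Ici] at hx
      exact ((hWd (lt_trans one_pos hx)).differentiableAt).differentiableWithinAt
    · intro x hx
      rw [interior_Ici] at hx
      have hx0 : (0:ℝ) < x := lt_trans one_pos hx
      rw [(hWd hx0).deriv]
      have hkey : u x ^ (q / (p - 1)) * u x ^ (-β - 1) = 1 := by
        rw [← Real.rpow_add (hupos hx0.le)]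
        rw [show q / (p - 1) + (-β - 1) = 0 by rw [hβdef]; ring, Real.rpow_zero]
      have h1 : β * Θf x ≤ β * ((-deriv u x) * u x ^ (-β - 1)) := by
        apply mul_le_mul_of_nonneg_left _ hβ.le
        calc Θf x = u x ^ (q / (p - 1)) * Θf x * u x ^ (-β - 1) := by
              rw [show u x ^ (q / (p - 1)) * Θf x * u x ^ (-β - 1)
                  = (u x ^ (q / (p - 1)) * u x ^ (-β - 1)) * Θf x by ring, hkey, one_mul]
          _ ≤ (-deriv u x) * u x ^ (-β - 1) :=
              mul_le_mul_of_nonneg_right (hu'lb hx0)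
                (Real.rpow_nonneg (hupos hx0.le).le _)
      nlinarith [h1]
  have hlb : ∀ R : ℝ, 1 ≤ R → (u 1 ^ (-β) - β * J 1) + β * J R ≤ u R ^ (-β) := by
    intro R hR
    have := hWmono (Set.mem_Ici.2 le_rfl) (Set.mem_Ici.2 hR) hR
    simp only [hWdef] at this
    linarith
  have htop : Tendsto (fun R => u R ^ (-β)) atTop atTop := by
    apply tendsto_atTop_mono' atTop (Eventually.mono (eventually_ge_atTop 1) hlb)
    exact tendsto_atTop_add_const_left _ _ (hpc.const_mul_atTop hβ)
  have hfin : Tendsto (fun R => (u R ^ (-β)) ^ (-(1 / β))) atTop (𝓝 0) :=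
    (tendsto_rpow_neg_atTop (by positivity)).comp htop
  apply hfin.congr'
  apply Eventually.mono (eventually_ge_atTop 0)
  intro R hR
  have : (u R ^ (-β)) ^ (-(1 / β)) = u R := by
    rw [← Real.rpow_mul (hupos hR).le,
      show -β * -(1 / β) = 1 by field_simp, Real.rpow_one]
  exact this
end

section
variable {n : ℕ} {p q α : ℝ} {ψ u : ℝ → ℝ}
section
variable (hupos : ∀ ⦃r : ℝ⦄, 0 ≤ r → 0 < u r)
  (hudiff : ∀ ⦃r : ℝ⦄, 0 ≤ r → DifferentiableAt ℝ u r)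
  (hu'neg : ∀ ⦃r : ℝ⦄, 0 < r → deriv u r < 0)
  (habsu' : ∀ ⦃r : ℝ⦄, 0 < r →
    |deriv u r| ^ (p - 1) * ψ r ^ (n - 1) = -phiF n p ψ u r)
  (heqn : ∀ ⦃r : ℝ⦄, 0 < r →
    HasDerivAt (phiF n p ψ u) (-(ψ r ^ (n - 1) * u r ^ q)) r)

include hupos hudiff hu'neg habsu' heqn in
lemma pohozaev_hasDeriv (hn : 2 ≤ n) (hp1 : 1 < p) (hq1 : 0 < q + 1)
    (hψ : IsCHModel ψ) {r : ℝ} (hr : 0 < r) :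
    HasDerivAt (pohozaevP n p q ψ u) (Kfun n p q ψ r * |deriv u r| ^ p) r := by
  have hp0 : p ≠ 0 := by linarith
  have hp1' : p - 1 ≠ 0 := by linarith
  have hψr : 0 < ψ r := hψ.2.2.2.2 r hr
  have hBm : (0:ℝ) < ψ r ^ (n - 1) := pow_pos hψr _
  have hur : 0 < u r := hupos hr.le
  have hu'r : deriv u r < 0 := hu'neg hr
  have hA : (0:ℝ) < |deriv u r| := abs_pos.2 hu'r.ne
  have hud : HasDerivAt u (deriv u r) r := (hudiff hr.le).hasDerivAt
  have hΦd : HasDerivAt (phiF n p ψ u) (-(ψ r ^ (n - 1) * u r ^ q)) r := heqn hr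
  have hVd : HasDerivAt (Vfun n ψ) (ψ r ^ (n - 1)) r := Vfun_hasDeriv hψ r
  have hψd : HasDerivAt ψ (deriv ψ r) r := (psi_diff hψ r).hasDerivAt
  have hψmd : HasDerivAt (fun s => ψ s ^ (n - 1))
      ((↑(n - 1)) * ψ r ^ (n - 1 - 1) * deriv ψ r) r := hψd.pow (n - 1)
  have hXs : ∀ ⦃s : ℝ⦄, 0 < s →
      -phiF n p ψ u s / ψ s ^ (n - 1) = |deriv u s| ^ (p - 1) := by
    intro s hs
    rw [← habsu' hs]
    field_simp [pow_ne_zero (n-1) (hψ.2.2.2.2 s hs).ne']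
  set X : ℝ → ℝ := fun s => -phiF n p ψ u s / ψ s ^ (n - 1) with hXdef
  have hXr : X r = |deriv u r| ^ (p - 1) := hXs hr
  have hXrpos : 0 < X r := by rw [hXr]; positivity
  have hXd := (hΦd.neg).div hψmd hBm.ne'
  have hXpd := hXd.rpow_const (p := p / (p - 1)) (Or.inl hXrpos.ne')
  have hev : (fun s => X s ^ (p / (p - 1))) =ᶠ[𝓝 r] (fun s => |deriv u s| ^ p) := by
    filter_upwards [Ioi_mem_nhds hr] with s hs
    rw [hXdef]
    show (-phiF n p ψ u s / ψ s ^ (n - 1)) ^ (p / (p - 1)) = |deriv u s| ^ p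
    rw [hXs hs, ← Real.rpow_mul (abs_nonneg _),
      show (p - 1) * (p / (p - 1)) = p by field_simp]
  have hDabs : HasDerivAt (fun s => |deriv u s| ^ p)
      ((-(-(ψ r ^ (n - 1) * u r ^ q)) * ψ r ^ (n - 1) -
          -phiF n p ψ u r * (↑(n - 1) * ψ r ^ (n - 1 - 1) * deriv ψ r)) /
            (ψ r ^ (n - 1)) ^ 2 * (p / (p - 1)) * X r ^ (p / (p - 1) - 1)) r :=
    hXpd.congr_of_eventuallyEq hev.symm
  have huq : HasDerivAt (fun s => u s ^ (q + 1)) (deriv u r * (q + 1) * u r ^ q) r := by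
    have h := hud.rpow_const (p := q + 1) (Or.inl hur.ne')
    rwa [show q + 1 - 1 = q by ring] at h
  have hF : HasDerivAt (energyF p q u)
      ((-(-(ψ r ^ (n - 1) * u r ^ q)) * ψ r ^ (n - 1) -
          -phiF n p ψ u r * (↑(n - 1) * ψ r ^ (n - 1 - 1) * deriv ψ r)) /
            (ψ r ^ (n - 1)) ^ 2 * (p / (p - 1)) * X r ^ (p / (p - 1) - 1) * ((p - 1) / p)
        + deriv u r * (q + 1) * u r ^ q / (q + 1)) r := by
    have h := (hDabs.const_mul ((p - 1) / p)).add (huq.div_const (q + 1))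
    have he : energyF p q u = fun s => (p - 1) / p * |deriv u s| ^ p + u s ^ (q + 1) / (q + 1) := rfl
    rw [he]
    exact h.congr_deriv (by ring)
  have hPdef : pohozaevP n p q ψ u
      = fun s => Vfun n ψ s * energyF p q u s + (phiF n p ψ u s * u s) / (q + 1) := by
    funext s
    rw [pohozaevP, energyF, phiF, Vfun]
    ring
  have hPd : HasDerivAt (pohozaevP n p q ψ u)
      (ψ r ^ (n - 1) * energyF p q u r +
        Vfun n ψ r *
          ((-(-(ψ r ^ (n - 1) * u r ^ q)) * ψ r ^ (n - 1) -
            -phiF n p ψ u r * (↑(n - 1) * ψ r ^ (n - 1 - 1) * deriv ψ r)) /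
              (ψ r ^ (n - 1)) ^ 2 * (p / (p - 1)) * X r ^ (p / (p - 1) - 1) * ((p - 1) / p)
           + deriv u r * (q + 1) * u r ^ q / (q + 1)) +
        (-(ψ r ^ (n - 1) * u r ^ q) * u r + phiF n p ψ u r * deriv u r) / (q + 1)) r := by
    rw [hPdef]
    exact (hVd.mul hF).add ((hΦd.mul hud).div_const (q + 1))
  have hXexp : X r ^ (p / (p - 1) - 1) = |deriv u r| := by
    rw [hXr, ← Real.rpow_mul (abs_nonneg _),
      show (p - 1) * (p / (p - 1) - 1) = 1 by field_simp; ring, Real.rpow_one]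
  have hphi : phiF n p ψ u r = -(|deriv u r| ^ (p - 1) * ψ r ^ (n - 1)) := by
    have := habsu' hr; linarith
  have hAp : |deriv u r| ^ (p - 1) * |deriv u r| = |deriv u r| ^ p := by
    rw [← Real.rpow_add_one hA.ne', show p - 1 + 1 = p by ring]
  have hUq : u r ^ q * u r = u r ^ (q + 1) := by
    rw [← Real.rpow_add_one hur.ne']
  have hBm1 : ψ r ^ (n - 1 - 1) * ψ r = ψ r ^ (n - 1) := by
    rw [← pow_succ]; congr 1; omega
  have hcast : ((n - 1 : ℕ) : ℝ) = (n : ℝ) - 1 := by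
    rw [Nat.cast_sub (by omega : 1 ≤ n)]; norm_num
  have hwne : ψ r ^ (n - 1 - 1) ≠ 0 := pow_ne_zero _ hψr.ne'
  convert hPd using 1
  rw [Kfun, energyF, hXexp, hphi, hcast,
    show (∫ s in (0:ℝ)..r, ψ s ^ (n - 1)) = Vfun n ψ r from rfl]
  set A := |deriv u r| with hAdef
  rw [show deriv u r = -A from by rw [hAdef, abs_of_neg hu'r, neg_neg]]
  rw [← hAp, ← hUq, ← hBm1]
  field_simp
  ring
end

section
variable {n : ℕ} {p q : ℝ} {ψ : ℝ → ℝ}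
lemma G_hasDeriv (hn : 2 ≤ n) (hψ : IsCHModel ψ) (r : ℝ) :
    HasDerivAt (Gfun n ψ) ((n : ℝ) * deriv (deriv ψ) r * Vfun n ψ r) r := by
  have h1 : HasDerivAt (fun s => (n : ℝ) * deriv ψ s * Vfun n ψ s)
      ((n : ℝ) * (deriv (deriv ψ) r * Vfun n ψ r + deriv ψ r * ψ r ^ (n - 1))) r := by
    have h2 : HasDerivAt (fun s => deriv ψ s * Vfun n ψ s)
        (deriv (deriv ψ) r * Vfun n ψ r + deriv ψ r * ψ r ^ (n - 1)) r :=
      ((psi_deriv_diff hψ r).hasDerivAt).mul (Vfun_hasDeriv hψ r)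
    have h3 := h2.const_mul (n : ℝ)
    exact (h3.congr_deriv (by ring)).congr_of_eventuallyEq
      (Eventually.of_forall fun s => mul_assoc (n : ℝ) (deriv ψ s) (Vfun n ψ s))
  have h4 : HasDerivAt (fun s => ψ s ^ n) ((n : ℝ) * ψ r ^ (n - 1) * deriv ψ r) r :=
    ((psi_diff hψ r).hasDerivAt).pow n
  have h5 := h1.sub h4
  exact h5.congr_deriv (by ring)

lemma G_zero (hn : 2 ≤ n) (hψ : IsCHModel ψ) : Gfun n ψ 0 = 0 := by
  rw [Gfun, Vfun_zero, hψ.2.1, zero_pow (by omega : n ≠ 0)]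
  ring

lemma G_monoOn (hn : 2 ≤ n) (hψ : IsCHModel ψ) : MonotoneOn (Gfun n ψ) (Set.Ici 0) := by
  apply monotoneOn_of_deriv_nonneg (convex_Ici 0)
    (fun x _ => (G_hasDeriv hn hψ x).continuousAt.continuousWithinAt)
    (fun x _ => (G_hasDeriv hn hψ x).differentiableAt.differentiableWithinAt)
  intro x hx
  rw [interior_Ici] at hx
  rw [(G_hasDeriv hn hψ x).deriv]
  have h1 := hψ.2.2.2.1 x hx.le
  have h2 : 0 ≤ Vfun n ψ x := Vfun_nonneg hψ (le_of_lt hx)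
  positivity

lemma G_nonneg (hn : 2 ≤ n) (hψ : IsCHModel ψ) {r : ℝ} (hr : 0 ≤ r) :
    0 ≤ Gfun n ψ r := by
  rw [← G_zero hn hψ]
  exact G_monoOn hn hψ (Set.mem_Ici.2 le_rfl) (Set.mem_Ici.2 hr) hr

lemma G_pos (hn : 2 ≤ n) (hψ : IsCHModel ψ) {r₁ r₂ : ℝ} (hr₁ : 0 ≤ r₁) (hr₁₂ : r₁ < r₂)
    (hconv : ∀ s : ℝ, r₁ < s → s < r₂ → 0 < deriv (deriv ψ) s) :
    0 < Gfun n ψ r₂ := by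
  have hs : StrictMonoOn (Gfun n ψ) (Set.Icc r₁ r₂) := by
    apply strictMonoOn_of_deriv_pos (convex_Icc r₁ r₂)
      (fun x _ => (G_hasDeriv hn hψ x).continuousAt.continuousWithinAt)
    intro x hx
    rw [interior_Icc] at hx
    rw [(G_hasDeriv hn hψ x).deriv]
    have h1 := hconv x hx.1 hx.2
    have h2 : 0 < Vfun n ψ x := Vfun_pos hn hψ (lt_of_le_of_lt hr₁ hx.1)
    have hn0 : (0:ℝ) < (n:ℝ) := Nat.cast_pos.mpr (by omega)
    positivity
  calc (0:ℝ) ≤ Gfun n ψ r₁ := G_nonneg hn hψ hr₁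
    _ < Gfun n ψ r₂ := hs (Set.left_mem_Icc.2 hr₁₂.le) (Set.right_mem_Icc.2 hr₁₂.le) hr₁₂

lemma K_le (hn : 2 ≤ n) (hp1 : 1 < p) (hpn : p < n)
    (hq : (n : ℝ) * p / ((n : ℝ) - p) - 1 ≤ q) (hψ : IsCHModel ψ)
    {r : ℝ} (hr : 0 < r) :
    Kfun n p q ψ r ≤ -(((n : ℝ) - 1) / ((n : ℝ) * ψ r) * Gfun n ψ r) := by
  have hψr : 0 < ψ r := hψ.2.2.2.2 r hr
  have hn0 : (0:ℝ) < n := by positivity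
  have hnp : (0:ℝ) < (n:ℝ) - p := by linarith
  have hp0 : (0:ℝ) < p := by linarith
  have hq1 : (0:ℝ) < q + 1 := by
    have : (0:ℝ) < (n:ℝ) * p / ((n:ℝ) - p) := by positivity
    linarith
  have hc : (p - 1) / p + 1 / (q + 1) ≤ ((n:ℝ) - 1) / n := by
    have h1 : (n:ℝ) * p / ((n:ℝ) - p) ≤ q + 1 := by linarith
    have h2 : 1 / (q + 1) ≤ ((n:ℝ) - p) / ((n:ℝ) * p) := by
      rw [div_le_div_iff₀ hq1 (by positivity)]
      nlinarith [(div_le_iff₀ hnp).mp h1]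
    calc (p - 1) / p + 1 / (q + 1) ≤ (p - 1) / p + ((n:ℝ) - p) / ((n:ℝ) * p) := by linarith
      _ = ((n:ℝ) - 1) / n := by field_simp; ring
  have hKle : Kfun n p q ψ r ≤ ((n:ℝ) - 1) / n * ψ r ^ (n - 1) -
      ((n : ℝ) - 1) * (deriv ψ r / ψ r) * Vfun n ψ r := by
    rw [Kfun, show (∫ s in (0:ℝ)..r, ψ s ^ (n - 1)) = Vfun n ψ r from rfl]
    have := mul_le_mul_of_nonneg_right hc (pow_nonneg hψr.le (n - 1))
    linarith
  apply hKle.trans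
  have hpow : ψ r ^ (n - 1) * ψ r = ψ r ^ n := by rw [← pow_succ]; congr 1; omega
  apply le_of_eq
  rw [Gfun, ← hpow]
  field_simp
  ring

end

/-- in the `p`-stochastically complete case with `ψ'' > 0` somewhere,
every global radial solution has infinite energy. -/
theorem statement_10 (n : ℕ) (hn : 2 ≤ n) (p q : ℝ) (hp1 : 1 < p) (hpn : p < n)
    (hq : (n : ℝ) * p / ((n : ℝ) - p) - 1 ≤ q)
    (ψ : ℝ → ℝ) (hψ : IsCHModel ψ)
    (hpc : Tendsto (fun r : ℝ => ∫ s in (0:ℝ)..r, Theta n ψ s ^ (1 / (p - 1)))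
      atTop atTop)
    (r₁ r₂ : ℝ) (hr₁ : 0 ≤ r₁) (hr₁₂ : r₁ < r₂)
    (hconv : ∀ s : ℝ, r₁ < s → s < r₂ → 0 < deriv (deriv ψ) s)
    (α : ℝ) (hα : 0 < α)
    (u : ℝ → ℝ) (hu : IsRadialSolution n p q ψ ⊤ α u) :
    Tendsto (fun R : ℝ => ∫ r in (0:ℝ)..R, |deriv u r| ^ p * ψ r ^ (n - 1))
      atTop atTop := by
  -- basic numeric facts
  have hn0 : (0:ℝ) < (n:ℝ) := Nat.cast_pos.mpr (by omega)
  have hp0 : (0:ℝ) < p - 1 := by linarith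
  have hnp : (0:ℝ) < (n:ℝ) - p := by linarith
  have hppos : (0:ℝ) < p := by linarith
  have hqp : p - 1 < q := by
    have h1 : p < (n:ℝ) * p / ((n:ℝ) - p) := by
      rw [lt_div_iff₀ hnp]; nlinarith
    linarith
  have hq0 : (0:ℝ) ≤ q := by linarith
  have hq1 : (0:ℝ) < q + 1 := by linarith
  -- solution facts
  have hupos : ∀ ⦃r : ℝ⦄, 0 ≤ r → 0 < u r := fun r hr => u_pos hu hr
  have hudiff : ∀ ⦃r : ℝ⦄, 0 ≤ r → DifferentiableAt ℝ u r := fun r hr => u_diffAt hu hr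
  have hucont : ContinuousOn u (Set.Ici 0) := u_contOn hu
  have hu'cont : ContinuousOn (deriv u) (Set.Ici 0) := u'_contOn hu
  have hu'neg : ∀ ⦃r : ℝ⦄, 0 < r → deriv u r < 0 := fun r hr => u'_neg hu hn hp1 hψ hr
  have huanti : StrictAntiOn u (Set.Ici 0) := u_strictAnti hu hn hp1 hψ
  have hphieq : ∀ ⦃r : ℝ⦄, 0 ≤ r →
      phiF n p ψ u r = -∫ s in (0:ℝ)..r, ψ s ^ (n - 1) * u s ^ q :=
    fun r hr => phi_eq hu hn hp1 hψ hr
  have habsu' : ∀ ⦃r : ℝ⦄, 0 < r →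
      |deriv u r| ^ (p - 1) * ψ r ^ (n - 1) = -phiF n p ψ u r :=
    fun r hr => absu'_pow hu'neg hp1 hψ hr
  have heqn : ∀ ⦃r : ℝ⦄, 0 < r →
      HasDerivAt (phiF n p ψ u) (-(ψ r ^ (n - 1) * u r ^ q)) r :=
    fun r hr => hu.eqn r hr ENNReal.ofReal_lt_top
  have hu'lb : ∀ ⦃r : ℝ⦄, 0 < r →
      u r ^ (q / (p - 1)) * Theta n ψ r ^ (1 / (p - 1)) ≤ -deriv u r :=
    fun r hr => u'_lb hupos hucont huanti hu'neg hphieq hn hp1 hq0 hψ hr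
  have huzero : Tendsto u atTop (𝓝 0) :=
    u_to_zero hupos hucont hudiff hu'lb hn hp1 hqp hψ hpc
  have hPd : ∀ ⦃r : ℝ⦄, 0 < r →
      HasDerivAt (pohozaevP n p q ψ u) (Kfun n p q ψ r * |deriv u r| ^ p) r :=
    fun r hr => pohozaev_hasDeriv hupos hudiff hu'neg habsu' heqn hn hp1 hq1 hψ hr
  -- Pohozaev function basic facts
  have hPdef : pohozaevP n p q ψ u
      = fun s => Vfun n ψ s * energyF p q u s + (phiF n p ψ u s * u s) / (q + 1) := by
    funext s
    rw [pohozaevP, energyF, phiF, Vfun]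
    ring
  have hEnonneg : ∀ ⦃r : ℝ⦄, 0 ≤ r → 0 ≤ energyF p q u r := by
    intro r hr
    rw [energyF]
    have h1 : 0 ≤ |deriv u r| ^ p := Real.rpow_nonneg (abs_nonneg _) _
    have h2 : 0 ≤ u r ^ (q + 1) := Real.rpow_nonneg (hupos hr).le _
    have h3 : 0 ≤ (p - 1) / p := by positivity
    positivity
  have hPcont : ContinuousOn (pohozaevP n p q ψ u) (Set.Ici 0) := by
    rw [hPdef]
    apply ContinuousOn.add
    · apply ContinuousOn.mul
      · exact fun x _ => (Vfun_hasDeriv hψ x).continuousAt.continuousWithinAt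
      · have h1 : ContinuousOn (fun s => |deriv u s| ^ p) (Set.Ici 0) :=
          (hu'cont.abs).rpow_const (fun x _ => Or.inr hppos.le)
        have h2 : ContinuousOn (fun s => u s ^ (q + 1)) (Set.Ici 0) :=
          hucont.rpow_const (fun x hx => Or.inl (hupos hx).ne')
        exact (h1.const_smul ((p-1)/p)).add (h2.div_const (q+1))
    · exact ((phi_contOn hu hp1 hψ).mul hucont).div_const (q + 1)
  have hP0 : pohozaevP n p q ψ u 0 = 0 := by
    rw [pohozaevP]
    rw [intervalIntegral.integral_same, hψ.2.1, zero_pow (by omega : n - 1 ≠ 0)]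
    ring
  have hPanti : AntitoneOn (pohozaevP n p q ψ u) (Set.Ici 0) := by
    apply antitoneOn_of_deriv_nonpos (convex_Ici 0) hPcont
    · intro x hx
      rw [interior_Ici] at hx
      exact (hPd hx).differentiableAt.differentiableWithinAt
    · intro x hx
      rw [interior_Ici] at hx
      rw [(hPd hx).deriv]
      apply mul_nonpos_of_nonpos_of_nonneg _ (Real.rpow_nonneg (abs_nonneg _) _)
      apply le_trans (K_le hn hp1 hpn hq hψ hx)
      rw [neg_nonpos]
      apply mul_nonneg _ (G_nonneg hn hψ hx.le)
      apply div_nonneg (by norm_num; exact_mod_cast (by omega : 1 ≤ n)) _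
      exact mul_nonneg hn0.le (hψ.2.2.2.2 x hx).le
  -- quantitative negativity of P beyond r₃ := r₂ + 1
  set r₃ : ℝ := r₂ + 1 with hr₃def
  have hr₂0 : 0 < r₂ := lt_of_le_of_lt hr₁ hr₁₂
  have hr₃0 : 0 < r₃ := by linarith
  have hr₂₃ : r₂ ≤ r₃ := by linarith
  have hδ : 0 < Gfun n ψ r₂ := G_pos hn hψ hr₁ hr₁₂ hconv
  -- minimum of |u'| on [r₂, r₃]
  obtain ⟨x₀, hx₀mem, hx₀max⟩ := IsCompact.exists_isMaxOn isCompact_Icc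
    ⟨r₂, Set.left_mem_Icc.2 hr₂₃⟩
    (hu'cont.mono (fun x hx => le_trans hr₂0.le hx.1))
  set a : ℝ := -deriv u x₀ with hadef
  have ha : 0 < a := by
    rw [hadef, neg_pos]
    exact hu'neg (lt_of_lt_of_le hr₂0 hx₀mem.1)
  have hmin : ∀ s ∈ Set.Icc r₂ r₃, a ≤ |deriv u s| := by
    intro s hs
    rw [abs_of_neg (hu'neg (lt_of_lt_of_le hr₂0 hs.1)), hadef]
    exact neg_le_neg (hx₀max hs)
  have hψr₃ : 0 < ψ r₃ := hψ.2.2.2.2 r₃ hr₃0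
  set κ : ℝ := ((n:ℝ) - 1) / ((n:ℝ) * ψ r₃) * Gfun n ψ r₂ with hκdef
  have hn1 : (0:ℝ) < (n:ℝ) - 1 := by
    have : (2:ℝ) ≤ (n:ℝ) := by exact_mod_cast hn
    linarith
  have hκ : 0 < κ := by
    rw [hκdef]
    positivity
  have hKb : ∀ s ∈ Set.Icc r₂ r₃, Kfun n p q ψ s ≤ -κ := by
    intro s hs
    have hs0 : 0 < s := lt_of_lt_of_le hr₂0 hs.1
    apply le_trans (K_le hn hp1 hpn hq hψ hs0)
    rw [neg_le_neg_iff, hκdef]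
    apply mul_le_mul
    · apply div_le_div_of_nonneg_left hn1.le (mul_pos hn0 (hψ.2.2.2.2 s hs0))
      apply mul_le_mul_of_nonneg_left _ hn0.le
      exact psi_monoOn hψ (Set.mem_Ici.2 hs0.le) (Set.mem_Ici.2 hr₃0.le) hs.2
    · exact G_monoOn hn hψ (Set.mem_Ici.2 hr₂0.le) (Set.mem_Ici.2 hs0.le) hs.1
    · exact hδ.le
    · exact div_nonneg hn1.le (mul_nonneg hn0.le (hψ.2.2.2.2 s hs0).le)
  set ε : ℝ := κ * a ^ p with hεdef
  have hε : 0 < ε := by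
    rw [hεdef]
    exact mul_pos hκ (Real.rpow_pos_of_pos ha _)
  have hKpb : ∀ s ∈ Set.Icc r₂ r₃, Kfun n p q ψ s * |deriv u s| ^ p ≤ -ε := by
    intro s hs
    calc Kfun n p q ψ s * |deriv u s| ^ p ≤ (-κ) * |deriv u s| ^ p :=
          mul_le_mul_of_nonneg_right (hKb s hs) (Real.rpow_nonneg (abs_nonneg _) _)
      _ ≤ (-κ) * a ^ p := by
          apply mul_le_mul_of_nonpos_left _ (by linarith : -κ ≤ 0)
          exact Real.rpow_le_rpow ha.le (hmin s hs) hppos.le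
      _ = -ε := by rw [hεdef]; ring
  -- continuity of the integrand K * |u'|^p on [r₂, r₃]
  have hKcont : ContinuousOn (fun s => Kfun n p q ψ s * |deriv u s| ^ p)
      (Set.Icc r₂ r₃) := by
    have h1 : ContinuousOn (Kfun n p q ψ) (Set.Icc r₂ r₃) := by
      have hV : ContinuousOn (fun s => ∫ t in (0:ℝ)..s, ψ t ^ (n-1)) (Set.Icc r₂ r₃) :=
        fun x _ => (Vfun_hasDeriv hψ x).continuousAt.continuousWithinAt
      apply ContinuousOn.sub
      · exact (continuousOn_const.mul (((psi_diff hψ).continuous.pow _).continuousOn))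
      · apply ContinuousOn.mul
        · apply continuousOn_const.mul
          apply ContinuousOn.div (psi_deriv_diff hψ).continuous.continuousOn
            (psi_diff hψ).continuous.continuousOn
          intro x hx
          exact (hψ.2.2.2.2 x (lt_of_lt_of_le hr₂0 hx.1)).ne'
        · exact hV
    have h2 : ContinuousOn (fun s => |deriv u s| ^ p) (Set.Icc r₂ r₃) :=
      ((hu'cont.mono (fun x hx => le_trans hr₂0.le hx.1)).abs).rpow_const
        (fun x _ => Or.inr hppos.le)
    exact h1.mul h2
  have hPr₃ : pohozaevP n p q ψ u r₃ ≤ -ε := by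
    have hftc : ∫ s in r₂..r₃, Kfun n p q ψ s * |deriv u s| ^ p
        = pohozaevP n p q ψ u r₃ - pohozaevP n p q ψ u r₂ := by
      apply intervalIntegral.integral_eq_sub_of_hasDerivAt
      · intro x hx
        rw [Set.uIcc_of_le hr₂₃] at hx
        exact hPd (lt_of_lt_of_le hr₂0 hx.1)
      · apply ContinuousOn.intervalIntegrable
        rw [Set.uIcc_of_le hr₂₃]
        exact hKcont
    have hle : ∫ s in r₂..r₃, Kfun n p q ψ s * |deriv u s| ^ p
        ≤ ∫ s in r₂..r₃, (-ε : ℝ) := by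
      apply intervalIntegral.integral_mono_on hr₂₃
        (by apply ContinuousOn.intervalIntegrable; rw [Set.uIcc_of_le hr₂₃]; exact hKcont)
        intervalIntegrable_const
      intro x hx
      exact hKpb x hx
    rw [hftc] at hle
    have hcst : ∫ s in r₂..r₃, (-ε : ℝ) = -ε := by
      rw [intervalIntegral.integral_const, smul_eq_mul, hr₃def]
      ring
    rw [hcst] at hle
    have hP₂ : pohozaevP n p q ψ u r₂ ≤ 0 := by
      rw [← hP0]
      exact hPanti (Set.mem_Ici.2 le_rfl) (Set.mem_Ici.2 hr₂0.le) hr₂0.le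
    linarith
  have hPle : ∀ r, r₃ ≤ r → pohozaevP n p q ψ u r ≤ -ε := by
    intro r hr
    exact le_trans (hPanti (Set.mem_Ici.2 hr₃0.le)
      (Set.mem_Ici.2 (le_trans hr₃0.le hr)) hr) hPr₃
  -- flux times u is bounded below beyond r₃
  have hflux : ∀ r, r₃ ≤ r → ε * (q + 1) ≤ (-phiF n p ψ u r) * u r := by
    intro r hr
    have hr0 : 0 < r := lt_of_lt_of_le hr₃0 hr
    have hVF : 0 ≤ Vfun n ψ r * energyF p q u r :=
      mul_nonneg (Vfun_nonneg hψ hr0.le) (hEnonneg hr0.le)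
    have hPeq : pohozaevP n p q ψ u r
        = Vfun n ψ r * energyF p q u r + (phiF n p ψ u r * u r) / (q + 1) := by
      rw [hPdef]
    have h1 := hPle r hr
    rw [hPeq] at h1
    have h2 : (phiF n p ψ u r * u r) / (q + 1) ≤ -ε := by linarith
    have h3 : phiF n p ψ u r * u r ≤ -ε * (q + 1) := by
      rw [div_le_iff₀ hq1] at h2
      linarith
    nlinarith
  -- pointwise lower bound for the energy integrand beyond r₃
  have hEb : ∀ r, r₃ ≤ r →
      ε * (q + 1) * (-deriv u r / u r) ≤ |deriv u r| ^ p * ψ r ^ (n - 1) := by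
    intro r hr
    have hr0 : 0 < r := lt_of_lt_of_le hr₃0 hr
    have hA : 0 < |deriv u r| := abs_pos.2 (hu'neg hr0).ne
    have h1 : |deriv u r| ^ p * ψ r ^ (n - 1) = (-deriv u r) * (-phiF n p ψ u r) := by
      rw [← habsu' hr0, ← abs_of_neg (hu'neg hr0),
        show |deriv u r| ^ p = |deriv u r| ^ (p - 1) * |deriv u r| from by
          rw [← Real.rpow_add_one hA.ne', show p - 1 + 1 = p by ring]]
      ring
    have h2 : ε * (q + 1) / u r ≤ -phiF n p ψ u r := by
      rw [div_le_iff₀ (hupos hr0.le)]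
      have := hflux r hr
      nlinarith
    rw [h1]
    calc ε * (q + 1) * (-deriv u r / u r)
        = (-deriv u r) * (ε * (q + 1) / u r) := by ring
      _ ≤ (-deriv u r) * (-phiF n p ψ u r) := by
          apply mul_le_mul_of_nonneg_left h2
          linarith [hu'neg hr0]
  -- energy integrand continuity
  have hIcont : ContinuousOn (fun r => |deriv u r| ^ p * ψ r ^ (n - 1)) (Set.Ici 0) :=
    ((hu'cont.abs).rpow_const (fun x _ => Or.inr hppos.le)).mul
      (((psi_diff hψ).continuous.pow _).continuousOn)
  have hint : ∀ b c : ℝ, 0 ≤ b → b ≤ c →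
      IntervalIntegrable (fun r => |deriv u r| ^ p * ψ r ^ (n - 1)) volume b c := by
    intro b c hb hbc
    apply ContinuousOn.intervalIntegrable
    apply hIcont.mono
    rw [Set.uIcc_of_le hbc]
    exact fun x hx => le_trans hb hx.1
  -- FTC for the logarithmic comparison function
  have hlogint : ∀ R, r₃ ≤ R →
      ∫ r in r₃..R, ε * (q + 1) * (-deriv u r / u r)
        = ε * (q + 1) * (Real.log (u r₃) - Real.log (u R)) := by
    intro R hR
    have hd : ∀ x ∈ Set.uIcc r₃ R,
        HasDerivAt (fun s => -(ε * (q + 1)) * Real.log (u s))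
          (ε * (q + 1) * (-deriv u x / u x)) x := by
      intro x hx
      rw [Set.uIcc_of_le hR] at hx
      have hx0 : 0 < x := lt_of_lt_of_le hr₃0 hx.1
      have hld : HasDerivAt (fun s => Real.log (u s)) (deriv u x / u x) x :=
        ((hudiff hx0.le).hasDerivAt).log (hupos hx0.le).ne'
      have := hld.const_mul (-(ε * (q + 1)))
      exact this.congr_deriv (by ring)
    have hic : IntervalIntegrable (fun x => ε * (q + 1) * (-deriv u x / u x)) volume r₃ R := by
      apply ContinuousOn.intervalIntegrable
      rw [Set.uIcc_of_le hR]
      apply ContinuousOn.mul continuousOn_const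
      apply ContinuousOn.div
      · exact (hu'cont.mono (fun x hx => le_trans hr₃0.le hx.1)).neg
      · exact hucont.mono (fun x hx => le_trans hr₃0.le hx.1)
      · exact fun x hx => (hupos (le_trans hr₃0.le hx.1)).ne'
    rw [intervalIntegral.integral_eq_sub_of_hasDerivAt hd hic]
    ring
  -- the energy comparison
  have hcomp : ∀ R, r₃ ≤ R →
      (∫ r in (0:ℝ)..r₃, |deriv u r| ^ p * ψ r ^ (n - 1))
        + ε * (q + 1) * (Real.log (u r₃) - Real.log (u R))
      ≤ ∫ r in (0:ℝ)..R, |deriv u r| ^ p * ψ r ^ (n - 1) := by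
    intro R hR
    have hsplit := intervalIntegral.integral_add_adjacent_intervals
      (hint 0 r₃ le_rfl hr₃0.le) (hint r₃ R hr₃0.le hR)
    rw [← hsplit]
    apply add_le_add_right
    rw [← hlogint R hR]
    apply intervalIntegral.integral_mono_on hR
      (by
        apply ContinuousOn.intervalIntegrable
        rw [Set.uIcc_of_le hR]
        apply ContinuousOn.mul continuousOn_const
        apply ContinuousOn.div
        · exact (hu'cont.mono (fun x hx => le_trans hr₃0.le hx.1)).neg
        · exact hucont.mono (fun x hx => le_trans hr₃0.le hx.1)
        · exact fun x hx => (hupos (le_trans hr₃0.le hx.1)).ne')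
      (hint r₃ R hr₃0.le hR)
    intro x hx
    exact hEb x hx.1
  -- the right-hand side tends to infinity
  have hlog : Tendsto (fun R => Real.log (u R)) atTop atBot := by
    have h1 : Tendsto u atTop (𝓝[≠] (0:ℝ)) := by
      apply tendsto_nhdsWithin_of_tendsto_nhds_of_eventually_within _ huzero
      filter_upwards [eventually_ge_atTop (0:ℝ)] with R hR
      exact (hupos hR).ne'
    exact Real.tendsto_log_nhdsNE_zero.comp h1
  have hrhs : Tendsto (fun R => (∫ r in (0:ℝ)..r₃, |deriv u r| ^ p * ψ r ^ (n - 1))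
      + ε * (q + 1) * (Real.log (u r₃) - Real.log (u R))) atTop atTop := by
    apply tendsto_atTop_add_const_left
    apply Tendsto.const_mul_atTop (by positivity : (0:ℝ) < ε * (q + 1))
    apply tendsto_atTop_add_const_left
    exact (tendsto_neg_atBot_atTop).comp hlog
  exact tendsto_atTop_mono' atTop
    (by filter_upwards [eventually_ge_atTop r₃] with R hR using hcomp R hR) hrhs
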